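/- arXiv:2605.15278 — 2 statements merged into one kernel-verified Lean document; each statement's English description precedes it below -/
import Mathlib

section
/- For all x ≥ 0, h(x + x²/6) ≥ x²/2, where h(u) = (1+u)log(1+u) − u. -/
/-!
With `u = x + x²/6` and `h' u = log (1 + u)`, the derivative of `x ↦ h u - x²/2` factors as
`(1 + x/3) (log (1 + u) - 3x/(3 + x))`. The bracket vanishes at `0` and has derivative
`(x³/3 + 3x²/2) / ((1 + u) (3 + x)²) ≥ 0`, so both functions are nonnegative for `x ≥ 0`.
-/

open Real Set

theorem monotoneOn_Ici_of_hasDerivAt_nonneg {a : ℝ} {f f' : ℝ → ℝ}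
    (hf : ∀ t, a ≤ t → HasDerivAt f (f' t) t) (hf' : ∀ t, a < t → 0 ≤ f' t) :
    MonotoneOn f (Ici a) :=
  monotoneOn_of_hasDerivWithinAt_nonneg (convex_Ici a)
    (fun t ht ↦ (hf t ht).continuousAt.continuousWithinAt)
    (fun t ht ↦ (hf t (le_of_lt (by simpa using ht))).hasDerivWithinAt)
    (fun t ht ↦ hf' t (by simpa using ht))

noncomputable def bennettH (u : ℝ) : ℝ := (1 + u) * log (1 + u) - u

theorem hasDerivAt_bennettH {u : ℝ} (hu : -1 < u) : HasDerivAt bennettH (log (1 + u)) u := by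
  have hpos : 1 + u ≠ 0 := by linarith
  have h1 : HasDerivAt (fun v : ℝ ↦ 1 + v) 1 u := (hasDerivAt_id' u).const_add 1
  exact ((h1.mul (h1.log hpos)).sub (hasDerivAt_id' u)).congr_deriv (by field_simp; ring)

theorem hasDerivAt_add_sq_div_six (t : ℝ) :
    HasDerivAt (fun s : ℝ ↦ s + s ^ 2 / 6) (1 + t / 3) t :=
  ((hasDerivAt_id' t).add ((hasDerivAt_pow 2 t).div_const 6)).congr_deriv (by ring)

theorem three_mul_div_three_add_le_log {x : ℝ} (hx : 0 ≤ x) :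
    3 * x / (3 + x) ≤ log (1 + (x + x ^ 2 / 6)) := by
  set G : ℝ → ℝ := fun t ↦ log (1 + (t + t ^ 2 / 6)) - 3 * t / (3 + t)
  have hG : ∀ t, 0 ≤ t →
      HasDerivAt G ((1 + t / 3) / (1 + (t + t ^ 2 / 6)) - 9 / (3 + t) ^ 2) t := by
    intro t ht
    have hq : HasDerivAt (fun s : ℝ ↦ 3 * s / (3 + s)) (9 / (3 + t) ^ 2) t :=
      (((hasDerivAt_id' t).const_mul 3).div ((hasDerivAt_id' t).const_add 3)
        (by positivity)).congr_deriv (by ring)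
    exact (((hasDerivAt_add_sq_div_six t).const_add 1).log (by positivity)).sub hq
  have hmono : MonotoneOn G (Ici 0) := by
    refine monotoneOn_Ici_of_hasDerivAt_nonneg hG fun t ht ↦ ?_
    rw [sub_nonneg, div_le_div_iff₀ (by positivity) (by positivity)]
    nlinarith [pow_pos ht 2, pow_pos ht 3]
  simpa [G] using hmono self_mem_Ici hx hx

/-- For all `x ≥ 0`, `h (x + x²/6) ≥ x²/2`, where `h u = (1+u)·log(1+u) − u`. -/
theorem bennettH_ge_half_sq (x : ℝ) (hx : 0 ≤ x) :
    (1 + (x + x ^ 2 / 6)) * Real.log (1 + (x + x ^ 2 / 6)) - (x + x ^ 2 / 6)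
      ≥ x ^ 2 / 2 := by
  set F : ℝ → ℝ := fun t ↦ bennettH (t + t ^ 2 / 6) - t ^ 2 / 2
  have hF : ∀ t, 0 ≤ t → HasDerivAt F
      ((1 + t / 3) * (log (1 + (t + t ^ 2 / 6)) - 3 * t / (3 + t))) t := by
    intro t ht
    have hu : -1 < t + t ^ 2 / 6 := by nlinarith
    refine (((hasDerivAt_bennettH hu).comp t (hasDerivAt_add_sq_div_six t)).sub
      ((hasDerivAt_pow 2 t).div_const 2)).congr_deriv ?_
    field_simp
    ring
  have hmono : MonotoneOn F (Ici 0) :=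
    monotoneOn_Ici_of_hasDerivAt_nonneg hF fun t ht ↦
      mul_nonneg (by positivity) (sub_nonneg.2 (three_mul_div_three_add_le_log ht.le))
  simpa [F, bennettH] using hmono self_mem_Ici hx hx
end

section
/- For a positive semi-definite matrix V and s ≥ 0 with σ² ≥ ‖V‖, tr(exp(sV) − I) ≤ (exp(s·σ²) − 1)·tr(V)/σ². -/
open Matrix
open scoped Matrix.Norms.L2Operator

/-!
Diagonalise `V`: by the functional calculus, `tr(exp(sV) − I) = ∑ᵢ (exp(sλᵢ) − 1)` and
`tr V = ∑ᵢ λᵢ`, where the eigenvalues `λᵢ` lie in `[0, ‖V‖] ⊆ [0, σ²]`. On that interval the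
convex function `x ↦ exp(sx) − 1` lies below its chord `x ↦ (exp(sσ²) − 1) x / σ²`; summing the
chord bound over the eigenvalues gives the claim.
-/

/-- For `c = 0` both sides vanish, the right one through `x / 0 = 0`. -/
theorem ConvexOn.sub_apply_zero_le_mul_div {f : ℝ → ℝ} {c x : ℝ}
    (hf : ConvexOn ℝ (Set.Icc 0 c) f) (hx0 : 0 ≤ x) (hxc : x ≤ c) :
    f x - f 0 ≤ (f c - f 0) * x / c := by
  rcases (hx0.trans hxc).eq_or_lt with rfl | hc
  · simp [le_antisymm hxc hx0]
  have hconv := hf.2 (Set.left_mem_Icc.2 hc.le) (Set.right_mem_Icc.2 hc.le)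
    (sub_nonneg.2 ((div_le_one hc).2 hxc)) (div_nonneg hx0 hc.le) (sub_add_cancel 1 (x / c))
  simp only [smul_eq_mul, mul_zero, zero_add, div_mul_cancel₀ x hc.ne'] at hconv
  have hchord : (f c - f 0) * x / c = x / c * f c - x / c * f 0 := by ring
  linarith

theorem IsSelfAdjoint.exp_smul_sub_one_eq_cfc {A : Type*} [NormedRing A] [StarRing A]
    [NormedAlgebra ℝ A] [StarModule ℝ A] [ContinuousFunctionalCalculus ℝ A IsSelfAdjoint]
    {a : A} (ha : IsSelfAdjoint a) (s : ℝ) :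
    NormedSpace.exp (s • a) - 1 = cfc (fun x => Real.exp (s * x) - 1) a := by
  rw [← CFC.real_exp_eq_normedSpace_exp, ← cfc_comp_smul s Real.exp a, cfc_sub _ _ a,
    cfc_const_one ℝ a]
  rfl

namespace Matrix.IsHermitian

variable {n 𝕜 : Type*} [RCLike 𝕜] [Fintype n] [DecidableEq n] {A : Matrix n n 𝕜}

theorem trace_cfc (hA : A.IsHermitian) (f : ℝ → ℝ) :
    (cfc f A).trace = ∑ i, (f (hA.eigenvalues i) : 𝕜) := by
  rw [hA.cfc_eq, IsHermitian.cfc, Unitary.conjStarAlgAut_apply, trace_mul_cycle,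
    Unitary.coe_star_mul_self, one_mul, trace_diagonal]
  rfl

theorem abs_eigenvalues_le_l2_opNorm (hA : A.IsHermitian) (i : n) :
    |hA.eigenvalues i| ≤ ‖A‖ := by
  have h := A.l2_opNorm_mulVec (hA.eigenvectorBasis i)
  rw [hA.mulVec_eigenvectorBasis] at h
  simpa only [PiLp.continuousLinearEquiv_symm_apply, WithLp.toLp_smul, WithLp.toLp_ofLp,
    norm_smul, Real.norm_eq_abs, OrthonormalBasis.norm_eq_one, mul_one] using h

end Matrix.IsHermitian

theorem trace_exp_sub_one_le_intrinsic_general {n : Type*} [Fintype n] [DecidableEq n]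
    (V : Matrix n n ℝ) (hV : V.PosSemidef) (s : ℝ)
    (σ2 : ℝ) (hσ : ‖V‖ ≤ σ2) :
    ((NormedSpace.exp (s • V) - 1).trace : ℝ)
      ≤ (Real.exp (s * σ2) - 1) * (V.trace : ℝ) / σ2 := by
  have hexp_convex : ConvexOn ℝ (Set.Icc 0 σ2) (fun x => Real.exp (s * x)) :=
    (convexOn_exp.comp_linearMap (LinearMap.mul ℝ ℝ s)).subset (Set.subset_univ _)
      (convex_Icc 0 σ2)
  have hA := hV.isHermitian
  rw [hA.isSelfAdjoint.exp_smul_sub_one_eq_cfc, hA.trace_cfc, hA.trace_eq_sum_eigenvalues,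
    Finset.mul_sum, Finset.sum_div]
  gcongr with i
  have hle : hA.eigenvalues i ≤ σ2 :=
    (le_abs_self _).trans ((hA.abs_eigenvalues_le_l2_opNorm i).trans hσ)
  simpa using hexp_convex.sub_apply_zero_le_mul_div (hV.eigenvalues_nonneg i) hle

/-- For a positive semi-definite matrix `V ≠ 0`, `s ≥ 0` and `σ² ≥ ‖V‖ > 0`,
`tr(exp(sV) − I) ≤ (exp(s·σ²) − 1)·tr(V)/σ²`. -/
theorem trace_exp_sub_one_le_intrinsic {n : Type*} [Fintype n] [DecidableEq n]
    (V : Matrix n n ℝ) (hV : V.PosSemidef) (hV0 : V ≠ 0) (s : ℝ) (hs : 0 ≤ s)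
    (σ2 : ℝ) (hσ : ‖V‖ ≤ σ2) :
    ((NormedSpace.exp (s • V) - 1).trace : ℝ)
      ≤ (Real.exp (s * σ2) - 1) * (V.trace : ℝ) / σ2 :=
  trace_exp_sub_one_le_intrinsic_general V hV s σ2 hσ
end
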